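/- For every simple graph G on n vertices, the sum of the largest adjacency eigenvalue of G and the largest adjacency eigenvalue of its complement is strictly less than √2 · n. -/

import Mathlib

/-!
Both `μ₁(G)²` and `μ₁(Ḡ)²` are bounded by the sum of the squared eigenvalues of their adjacency
matrices, i.e. by `tr A(G)² = ∑ deg_G` and `tr A(Ḡ)² = ∑ deg_Ḡ`. Every vertex has
`deg_G v + deg_Ḡ v = n - 1`, so `μ₁(G)² + μ₁(Ḡ)² < n²`, and then
`(μ₁(G) + μ₁(Ḡ))² ≤ 2 (μ₁(G)² + μ₁(Ḡ)²) < 2 n²`.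
-/

open Matrix SimpleGraph

/-- The eigenvalues of the adjacency matrix of `G`, in descending order:
`graphEig G i` is the `(i+1)`-th largest eigenvalue. -/
noncomputable def graphEig {n : ℕ} (G : SimpleGraph (Fin n)) (i : Fin n) : ℝ :=
  letI := Classical.decRel G.Adj
  letI hH : (G.adjMatrix ℝ).IsHermitian := by rw [Matrix.IsHermitian, conjTranspose_eq_transpose_of_trivial]; exact G.isSymm_adjMatrix
  hH.eigenvalues (Tuple.sort hH.eigenvalues i.rev)

open Finset

lemma Real.add_lt_sqrt_two_mul_of_sq_add_sq_lt {a b x : ℝ} (hx : 0 ≤ x)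
    (h : a ^ 2 + b ^ 2 < x ^ 2) : a + b < √2 * x := by
  have hsq : (a + b) ^ 2 < (√2 * x) ^ 2 := by
    rw [mul_pow, Real.sq_sqrt zero_le_two]
    nlinarith [sq_nonneg (a - b)]
  exact (le_abs_self _).trans_lt (abs_lt_of_sq_lt_sq hsq (by positivity))

namespace Matrix.IsHermitian

variable {𝕜 ι : Type*} [RCLike 𝕜] [Fintype ι] [DecidableEq ι] {A : Matrix ι ι 𝕜}

lemma trace_mul_self (hA : A.IsHermitian) :
    (A * A).trace = ∑ i, ((hA.eigenvalues i ^ 2 : ℝ) : 𝕜) := by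
  conv_lhs => rw [hA.spectral_theorem, ← map_mul, Unitary.conjStarAlgAut_apply, trace_mul_cycle,
    Unitary.coe_star_mul_self, one_mul, diagonal_mul_diagonal, trace_diagonal]
  simp [sq]

lemma eigenvalues_sq_le_re_trace_mul_self (hA : A.IsHermitian) (i : ι) :
    hA.eigenvalues i ^ 2 ≤ RCLike.re (A * A).trace := by
  rw [hA.trace_mul_self, map_sum]
  simp_rw [RCLike.ofReal_re]
  exact single_le_sum (fun j _ ↦ sq_nonneg (hA.eigenvalues j)) (mem_univ i)

end Matrix.IsHermitian

namespace SimpleGraph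

variable {V : Type*} [Fintype V] (G : SimpleGraph V) [DecidableRel G.Adj]

lemma trace_adjMatrix_mul_self {α : Type*} [NonAssocSemiring α] [DecidableEq V] :
    (G.adjMatrix α * G.adjMatrix α).trace = ∑ v, (G.degree v : α) :=
  sum_congr rfl fun v _ ↦ adjMatrix_mul_self_apply_self G v

lemma degree_add_degree_compl_lt_card [DecidableEq V] (v : V) :
    G.degree v + Gᶜ.degree v < Fintype.card V := by
  have := G.degree_lt_card_verts v
  rw [degree_compl]
  omega

lemma sum_degree_add_sum_degree_compl_lt [DecidableEq V] [Nonempty V] :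
    ∑ v, G.degree v + ∑ v, Gᶜ.degree v < Fintype.card V ^ 2 := by
  rw [← sum_add_distrib, sq, ← smul_eq_mul, ← card_univ, ← sum_const]
  exact sum_lt_sum_of_nonempty univ_nonempty fun v _ ↦ G.degree_add_degree_compl_lt_card v

lemma eigenvalues_adjMatrix_sq_le_sum_degree [DecidableEq V] (i : V) :
    (G.isHermitian_adjMatrix ℝ).eigenvalues i ^ 2 ≤ ∑ v, (G.degree v : ℝ) := by
  simpa [trace_adjMatrix_mul_self] using
    (G.isHermitian_adjMatrix ℝ).eigenvalues_sq_le_re_trace_mul_self i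

end SimpleGraph

lemma graphEig_sq_le_sum_degree {n : ℕ} (G : SimpleGraph (Fin n)) [DecidableRel G.Adj]
    (i : Fin n) : graphEig G i ^ 2 ≤ ∑ v, (G.degree v : ℝ) := by
  obtain rfl : ‹DecidableRel G.Adj› = Classical.decRel G.Adj := Subsingleton.elim _ _
  let _ := Classical.decRel G.Adj
  exact G.eigenvalues_adjMatrix_sq_le_sum_degree _

theorem stmt1 (n : ℕ) (hn : 1 ≤ n) (G : SimpleGraph (Fin n)) :
    graphEig G ⟨0, hn⟩ + graphEig Gᶜ ⟨0, hn⟩ < Real.sqrt 2 * n := by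
  classical
  have : Nonempty (Fin n) := ⟨⟨0, hn⟩⟩
  have hG := graphEig_sq_le_sum_degree G ⟨0, hn⟩
  have hGc := graphEig_sq_le_sum_degree Gᶜ ⟨0, hn⟩
  have hdeg : ∑ v, (G.degree v : ℝ) + ∑ v, (Gᶜ.degree v : ℝ) < (n : ℝ) ^ 2 := by
    exact_mod_cast Fintype.card_fin n ▸ G.sum_degree_add_sum_degree_compl_lt
  exact Real.add_lt_sqrt_two_mul_of_sq_add_sq_lt n.cast_nonneg (by linarith)
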